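/- Let (X, μ) be a measure space, p, q : X → ℝ≥0 measurable with p + λq > 0 μ-a.e., λ > 0, and h, b : X → ℝ measurable with all integrals finite. Define R(b) = ∫ p·(h+b)² dμ + λ ∫ q·b² dμ. Then R(b) = λ ∫ (p q/(p+λq))·h² dμ + ∫ (p+λq)·(b − b*)² dμ where b*(x) = −(p(x)/(p(x)+λq(x)))·h(x). Consequently inf over measurable b of R(b) equals λ ∫ (p q/(p+λq))·h² dμ, attained at b = b*. -/
import Mathlib


open MeasureTheory

private lemma tilt_key (P Q H B lam : ℝ) (hS : P + lam * Q ≠ 0) :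
    P * (H + B) ^ 2 + lam * (Q * B ^ 2)
      = lam * ((P * Q / (P + lam * Q)) * H ^ 2)
        + (P + lam * Q) * (B - (-(P / (P + lam * Q)) * H)) ^ 2 := by
  field_simp
  ring

/-- population-level TILT risk decomposition and the induced
infimum (least value) of the auxiliary objective. -/
theorem tilt_risk_decomposition {X : Type*} [MeasurableSpace X] (μ : Measure X)
    (p q h : X → ℝ) (lam : ℝ) (hlam : 0 < lam)
    (hpm : Measurable p) (hqm : Measurable q) (hhm : Measurable h)
    (hp : ∀ x, 0 ≤ p x) (hq : ∀ x, 0 ≤ q x)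
    (hpos : ∀ᵐ x ∂μ, 0 < p x + lam * q x)
    (hIint : Integrable (fun x => (p x * q x / (p x + lam * q x)) * (h x) ^ 2) μ)
    (R : (X → ℝ) → ℝ)
    (hR : ∀ b : X → ℝ,
      R b = ∫ x, p x * (h x + b x) ^ 2 ∂μ + lam * ∫ x, q x * (b x) ^ 2 ∂μ)
    (bstar : X → ℝ)
    (hbstar : ∀ x, bstar x = -(p x / (p x + lam * q x)) * h x) :
    (∀ b : X → ℝ, Measurable b →
      Integrable (fun x => p x * (h x + b x) ^ 2) μ →
      Integrable (fun x => q x * (b x) ^ 2) μ →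
      Integrable (fun x => (p x + lam * q x) * (b x - bstar x) ^ 2) μ →
      R b = lam * ∫ x, (p x * q x / (p x + lam * q x)) * (h x) ^ 2 ∂μ
            + ∫ x, (p x + lam * q x) * (b x - bstar x) ^ 2 ∂μ) ∧
    IsLeast
      {r : ℝ | ∃ b : X → ℝ, Measurable b ∧
        Integrable (fun x => p x * (h x + b x) ^ 2) μ ∧
        Integrable (fun x => q x * (b x) ^ 2) μ ∧ r = R b}
      (lam * ∫ x, (p x * q x / (p x + lam * q x)) * (h x) ^ 2 ∂μ) := by
  have hbstar_fun : bstar = fun x => -(p x / (p x + lam * q x)) * h x := funext hbstar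
  have hbsm : Measurable bstar := by
    rw [hbstar_fun]
    exact ((hpm.div (hpm.add (measurable_const.mul hqm))).neg.mul hhm)
  -- the a.e. pointwise identity for any b
  have hkey : ∀ b : X → ℝ, ∀ᵐ x ∂μ,
      p x * (h x + b x) ^ 2 + lam * (q x * (b x) ^ 2)
        = lam * ((p x * q x / (p x + lam * q x)) * (h x) ^ 2)
          + (p x + lam * q x) * (b x - bstar x) ^ 2 := by
    intro b
    filter_upwards [hpos] with x hx
    rw [hbstar x]
    exact tilt_key (p x) (q x) (h x) (b x) lam (ne_of_gt hx)
  -- part A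
  have partA : ∀ b : X → ℝ, Measurable b →
      Integrable (fun x => p x * (h x + b x) ^ 2) μ →
      Integrable (fun x => q x * (b x) ^ 2) μ →
      Integrable (fun x => (p x + lam * q x) * (b x - bstar x) ^ 2) μ →
      R b = lam * ∫ x, (p x * q x / (p x + lam * q x)) * (h x) ^ 2 ∂μ
            + ∫ x, (p x + lam * q x) * (b x - bstar x) ^ 2 ∂μ := by
    intro b hbm hi1 hi2 hi3
    rw [hR b]
    calc ∫ x, p x * (h x + b x) ^ 2 ∂μ + lam * ∫ x, q x * (b x) ^ 2 ∂μ
        = ∫ x, (p x * (h x + b x) ^ 2 + lam * (q x * (b x) ^ 2)) ∂μ := by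
          rw [integral_add hi1 (hi2.const_mul lam), integral_const_mul]
      _ = ∫ x, (lam * ((p x * q x / (p x + lam * q x)) * (h x) ^ 2)
            + (p x + lam * q x) * (b x - bstar x) ^ 2) ∂μ :=
          integral_congr_ae (hkey b)
      _ = lam * ∫ x, (p x * q x / (p x + lam * q x)) * (h x) ^ 2 ∂μ
            + ∫ x, (p x + lam * q x) * (b x - bstar x) ^ 2 ∂μ := by
          rw [integral_add (hIint.const_mul lam) hi3, integral_const_mul]
  refine ⟨partA, ?_, ?_⟩
  · -- membership: attained at bstar
    have hkeys : ∀ᵐ x ∂μ,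
        p x * (h x + bstar x) ^ 2 + lam * (q x * (bstar x) ^ 2)
          = lam * ((p x * q x / (p x + lam * q x)) * (h x) ^ 2) := by
      filter_upwards [hkey bstar] with x hx
      simpa using hx
    have hi1 : Integrable (fun x => p x * (h x + bstar x) ^ 2) μ := by
      refine (hIint.const_mul lam).mono'
        ((hpm.mul ((hhm.add hbsm).pow measurable_const)).aestronglyMeasurable) ?_
      filter_upwards [hkeys] with x hx
      have h1 : 0 ≤ p x * (h x + bstar x) ^ 2 := mul_nonneg (hp x) (sq_nonneg _)
      have h2 : 0 ≤ lam * (q x * (bstar x) ^ 2) :=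
        mul_nonneg hlam.le (mul_nonneg (hq x) (sq_nonneg _))
      rw [Real.norm_eq_abs, abs_of_nonneg h1]
      linarith
    have hi2 : Integrable (fun x => q x * (bstar x) ^ 2) μ := by
      refine hIint.mono'
        ((hqm.mul (hbsm.pow measurable_const)).aestronglyMeasurable) ?_
      filter_upwards [hkeys] with x hx
      have h1 : 0 ≤ p x * (h x + bstar x) ^ 2 := mul_nonneg (hp x) (sq_nonneg _)
      have h2 : 0 ≤ q x * (bstar x) ^ 2 := mul_nonneg (hq x) (sq_nonneg _)
      rw [Real.norm_eq_abs, abs_of_nonneg h2]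
      nlinarith
    refine ⟨bstar, hbsm, hi1, hi2, ?_⟩
    rw [hR bstar]
    symm
    calc ∫ x, p x * (h x + bstar x) ^ 2 ∂μ + lam * ∫ x, q x * (bstar x) ^ 2 ∂μ
        = ∫ x, (p x * (h x + bstar x) ^ 2 + lam * (q x * (bstar x) ^ 2)) ∂μ := by
          rw [integral_add hi1 (hi2.const_mul lam), integral_const_mul]
      _ = ∫ x, lam * ((p x * q x / (p x + lam * q x)) * (h x) ^ 2) ∂μ :=
          integral_congr_ae hkeys
      _ = lam * ∫ x, (p x * q x / (p x + lam * q x)) * (h x) ^ 2 ∂μ :=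
          integral_const_mul _ _
  · -- lower bound
    rintro r ⟨b, hbm, hi1, hi2, rfl⟩
    have hsum : Integrable (fun x => p x * (h x + b x) ^ 2 + lam * (q x * (b x) ^ 2)) μ :=
      hi1.add (hi2.const_mul lam)
    have hmono : ∀ᵐ x ∂μ,
        lam * ((p x * q x / (p x + lam * q x)) * (h x) ^ 2)
          ≤ p x * (h x + b x) ^ 2 + lam * (q x * (b x) ^ 2) := by
      filter_upwards [hkey b, hpos] with x hx hs
      have : 0 ≤ (p x + lam * q x) * (b x - bstar x) ^ 2 :=
        mul_nonneg hs.le (sq_nonneg _)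
      linarith [hx]
    have := integral_mono_ae (hIint.const_mul lam) hsum hmono
    rw [integral_const_mul] at this
    rw [hR b]
    calc lam * ∫ x, (p x * q x / (p x + lam * q x)) * (h x) ^ 2 ∂μ
        ≤ ∫ x, (p x * (h x + b x) ^ 2 + lam * (q x * (b x) ^ 2)) ∂μ := this
      _ = ∫ x, p x * (h x + b x) ^ 2 ∂μ + lam * ∫ x, q x * (b x) ^ 2 ∂μ := by
          rw [integral_add hi1 (hi2.const_mul lam), integral_const_mul]
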